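/- Let L be a Lie algebra over a field with center Z(L) = {0}, and suppose L = L₁ ⊕ L₂ is the internal direct sum of two Lie ideals L₁ and L₂. Then every triple derivation D of L satisfies D(L₁) ⊆ L₁ and D(L₂) ⊆ L₂. -/

import Mathlib

/-!
Write `D x = u + v` with `u ∈ L₁`, `v ∈ L₂` for `x ∈ L₁`. Since `[L₁, L₂] = 0`, an element of `L₂`
is central as soon as it commutes with `L₂`. For `y, z ∈ L₂` the triple derivation identity applied
to `⁅⁅y, x⁆, z⁆ = 0` leaves only `⁅⁅y, v⁆, z⁆ = 0`, so `⁅y, v⁆` is central, hence zero; then `v`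
itself is central, hence zero.
-/

section

variable {R L : Type*} [CommRing R] [LieRing L] [LieAlgebra R L]

def IsTripleDerivation (D : L →ₗ[R] L) : Prop :=
  ∀ x y z : L, D ⁅⁅x, y⁆, z⁆ = ⁅⁅D x, y⁆, z⁆ + ⁅⁅x, D y⁆, z⁆ + ⁅⁅x, y⁆, D z⁆

namespace LieIdeal

variable {I J : LieIdeal R L}

theorem lie_eq_zero_of_disjoint (h : Disjoint I J) {x y : L} (hx : x ∈ I) (hy : y ∈ J) :
    ⁅x, y⁆ = 0 := by
  have hmem : ⁅x, y⁆ ∈ I ⊓ J := LieSubmodule.lie_le_inf I J (LieSubmodule.lie_mem_lie hx hy)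
  rwa [disjoint_iff.mp h, LieSubmodule.mem_bot] at hmem

theorem eq_zero_of_mem_of_forall_lie_eq_zero (hcenter : LieAlgebra.center R L = ⊥)
    (hdisj : Disjoint I J) (hcodisj : Codisjoint I J) {v : L} (hv : v ∈ J)
    (hJ : ∀ y ∈ J, ⁅y, v⁆ = 0) : v = 0 := by
  have hcen : v ∈ LieAlgebra.center R L := fun z ↦ by
    obtain ⟨a, b, ha, hb, rfl⟩ := Submodule.codisjoint_iff_exists_add_eq.mp
      (LieSubmodule.codisjoint_toSubmodule.mpr hcodisj) z
    rw [add_lie, lie_eq_zero_of_disjoint hdisj ha hv, hJ b hb, zero_add]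
  rwa [hcenter, LieSubmodule.mem_bot] at hcen

theorem _root_.IsTripleDerivation.lie_lie_apply_eq_zero {D : L →ₗ[R] L}
    (hD : IsTripleDerivation D) (hdisj : Disjoint I J) {x y z : L} (hx : x ∈ I) (hy : y ∈ J)
    (hz : z ∈ J) : ⁅⁅y, D x⁆, z⁆ = 0 := by
  have hyx : ⁅y, x⁆ = 0 := by rw [← lie_skew, lie_eq_zero_of_disjoint hdisj hx hy, neg_zero]
  have hDyx : ⁅⁅D y, x⁆, z⁆ = 0 := lie_eq_zero_of_disjoint hdisj (lie_mem_right R L I _ x hx) hz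
  have key := hD y x z
  rw [hyx, zero_lie, map_zero, zero_lie, add_zero, hDyx, zero_add] at key
  exact key.symm

theorem apply_mem_of_isTripleDerivation (hcenter : LieAlgebra.center R L = ⊥)
    (hdisj : Disjoint I J) (hcodisj : Codisjoint I J) {D : L →ₗ[R] L} (hD : IsTripleDerivation D)
    {x : L} (hx : x ∈ I) : D x ∈ I := by
  obtain ⟨u, v, hu, hv, huv⟩ := Submodule.codisjoint_iff_exists_add_eq.mp
    (LieSubmodule.codisjoint_toSubmodule.mpr hcodisj) (D x)
  suffices v = 0 by rw [← huv, this, add_zero]; exact hu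
  refine eq_zero_of_mem_of_forall_lie_eq_zero hcenter hdisj hcodisj hv fun y hy ↦ ?_
  refine eq_zero_of_mem_of_forall_lie_eq_zero hcenter hdisj hcodisj
    (lie_mem_right R L J y v hv) fun z hz ↦ ?_
  have hyu : ⁅y, u⁆ = 0 := by rw [← lie_skew, lie_eq_zero_of_disjoint hdisj hu hy, neg_zero]
  calc ⁅z, ⁅y, v⁆⁆ = -⁅⁅y, D x⁆, z⁆ := by rw [← huv, lie_add, hyu, zero_add, ← lie_skew]
    _ = 0 := by rw [hD.lie_lie_apply_eq_zero hdisj hx hy hz, neg_zero]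

end LieIdeal

end

/-- Let `L` be a Lie algebra over a field with trivial center
which is the internal direct sum of two Lie ideals `L₁ ⊕ L₂`.  Then every
triple derivation of `L` preserves `L₁` and `L₂`. -/
theorem lie_tripleDerivation_preserves_ideals
    {F L : Type*} [Field F] [LieRing L] [LieAlgebra F L]
    (hcenter : LieAlgebra.center F L = ⊥)
    (L₁ L₂ : LieIdeal F L)
    (hdisj : L₁ ⊓ L₂ = ⊥)
    (hsum : L₁ ⊔ L₂ = ⊤)
    (D : L →ₗ[F] L)
    (hD : ∀ x y z : L, D ⁅⁅x, y⁆, z⁆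
        = ⁅⁅D x, y⁆, z⁆ + ⁅⁅x, D y⁆, z⁆ + ⁅⁅x, y⁆, D z⁆) :
    (∀ x ∈ L₁, D x ∈ L₁) ∧ (∀ x ∈ L₂, D x ∈ L₂) := by
  have hdisj' : Disjoint L₁ L₂ := disjoint_iff.mpr hdisj
  have hcodisj : Codisjoint L₁ L₂ := codisjoint_iff.mpr hsum
  exact ⟨fun _ ↦ LieIdeal.apply_mem_of_isTripleDerivation hcenter hdisj' hcodisj hD,
    fun _ ↦ LieIdeal.apply_mem_of_isTripleDerivation hcenter hdisj'.symm hcodisj.symm hD⟩
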